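/- Let T be a closed range CoR operator on a complex Hilbert space H such that R(T) + R(T*) is closed. Then 2 T (T + T*)† T* = 2 T* (T + T*)† T = P T P, where P is the orthogonal projection onto R(T) ∩ R(T*). -/

import Mathlib

/-!
Write `S = T + T*` and `X = S†`. Since `S` is self-adjoint, uniqueness of the Moore–Penrose
inverse makes `X` self-adjoint, so `Q = S X = X S`. The CoR property forces `ker S ⊆ ker T`:
if `T* z = -T z` then `T z ∈ R(T) ∩ R(T*)`, so `⟪Tz, Tz⟫ = ⟪Tz, T* z⟫ = -⟪Tz, Tz⟫`.
As `S (1 - Q) = 0`, this gives `T Q = T` and `Q T = T`, i.e.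
`T X T + T X T* = T = T X T + T* X T`. Hence `B = T X T* = T* X T` is self-adjoint with range in
`R(T) ∩ R(T*)`, so `P B = B P = B`. Finally `T P = T* P` by CoR, and
`2 B = (T X T + T X T*) P = T P = P T P`.
-/

open ContinuousLinearMap

structure IsMoorePenroseInverse {R : Type*} [Mul R] [Star R] (a x : R) : Prop where
  self_mul_mul_self : a * x * a = a
  mul_self_mul : x * a * x = x
  isSelfAdjoint_self_mul : IsSelfAdjoint (a * x)
  isSelfAdjoint_mul_self : IsSelfAdjoint (x * a)

namespace IsMoorePenroseInverse

section StarSemigroup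

variable {R : Type*} [Semigroup R] [StarMul R] {a x y : R}

protected theorem star (hx : IsMoorePenroseInverse a x) :
    IsMoorePenroseInverse (star a) (star x) where
  self_mul_mul_self := by rw [← star_mul, ← star_mul, ← mul_assoc, hx.self_mul_mul_self]
  mul_self_mul := by rw [← star_mul, ← star_mul, ← mul_assoc, hx.mul_self_mul]
  isSelfAdjoint_self_mul := by
    rw [← star_mul]; exact IsSelfAdjoint.star_iff.2 hx.isSelfAdjoint_mul_self
  isSelfAdjoint_mul_self := by
    rw [← star_mul]; exact IsSelfAdjoint.star_iff.2 hx.isSelfAdjoint_self_mul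

theorem self_mul_eq (hx : IsMoorePenroseInverse a x) (hy : IsMoorePenroseInverse a y) :
    a * x = a * y :=
  calc a * x = (a * y) * (a * x) := by rw [← mul_assoc, hy.self_mul_mul_self]
    _ = star (a * x * (a * y)) := by
      rw [star_mul, hx.isSelfAdjoint_self_mul.star_eq, hy.isSelfAdjoint_self_mul.star_eq]
    _ = a * y := by rw [← mul_assoc, hx.self_mul_mul_self, hy.isSelfAdjoint_self_mul.star_eq]

theorem mul_self_eq (hx : IsMoorePenroseInverse a x) (hy : IsMoorePenroseInverse a y) :
    x * a = y * a :=
  calc x * a = (x * a) * (y * a) := by rw [mul_assoc, ← mul_assoc a, hy.self_mul_mul_self]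
    _ = star (y * a * (x * a)) := by
      rw [star_mul, hx.isSelfAdjoint_mul_self.star_eq, hy.isSelfAdjoint_mul_self.star_eq]
    _ = y * a := by
      rw [mul_assoc, ← mul_assoc a, hx.self_mul_mul_self, hy.isSelfAdjoint_mul_self.star_eq]

theorem eq (hx : IsMoorePenroseInverse a x) (hy : IsMoorePenroseInverse a y) : x = y :=
  calc x = x * (a * x) := by rw [← mul_assoc, hx.mul_self_mul]
    _ = y * (a * y) := by rw [hx.self_mul_eq hy, ← mul_assoc, ← mul_assoc, hx.mul_self_eq hy]
    _ = y := by rw [← mul_assoc, hy.mul_self_mul]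

theorem isSelfAdjoint (ha : IsSelfAdjoint a) (hx : IsMoorePenroseInverse a x) :
    IsSelfAdjoint x := by
  have hx' := hx.star
  rw [ha.star_eq] at hx'
  exact (hx.eq hx').symm

theorem commute (ha : IsSelfAdjoint a) (hx : IsMoorePenroseInverse a x) : Commute a x := by
  have h := hx.isSelfAdjoint_self_mul.star_eq
  rwa [star_mul, ha.star_eq, (hx.isSelfAdjoint ha).star_eq, eq_comm] at h

end StarSemigroup

section Ring

variable {R : Type*} [Ring R] [StarRing R] {a t x : R}

theorem self_mul_one_sub_eq_zero (ha : IsSelfAdjoint a) (hx : IsMoorePenroseInverse a x) :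
    a * (1 - a * x) = 0 := by
  have h : star ((1 - a * x) * a) = 0 := by
    rw [sub_mul, one_mul, hx.self_mul_mul_self, sub_self, star_zero]
  rwa [star_mul, ha.star_eq, star_sub, star_one, hx.isSelfAdjoint_self_mul.star_eq] at h

section KernelCondition

variable (hx : IsMoorePenroseInverse (t + star t) x)
  (hker : ∀ r, (t + star t) * r = 0 → t * r = 0)
include hx hker

theorem mul_mul_add_star_eq_left : t * ((t + star t) * x) = t := by
  have h := hker _ (hx.self_mul_one_sub_eq_zero (.add_star_self t))
  rwa [mul_sub, mul_one, sub_eq_zero, eq_comm] at h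

theorem add_star_mul_mul_eq_right : (t + star t) * x * t = t := by
  have h := hx.self_mul_one_sub_eq_zero (.add_star_self t)
  have ht := hker _ h
  rw [add_mul, ht, zero_add] at h
  have h' := congrArg star h
  rwa [star_mul, star_star, star_sub, star_one, hx.isSelfAdjoint_self_mul.star_eq, star_zero,
    sub_mul, one_mul, sub_eq_zero, eq_comm] at h'

theorem mul_mul_add_mul_mul_star : t * x * t + t * x * star t = t := by
  rw [← mul_add, mul_assoc, ← (hx.commute (.add_star_self t)).eq,
    mul_mul_add_star_eq_left hx hker]

theorem mul_mul_add_star_mul_mul : t * x * t + star t * x * t = t := by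
  rw [← add_mul, ← add_mul, add_star_mul_mul_eq_right hx hker]

theorem mul_mul_star_eq_star_mul_mul : t * x * star t = star t * x * t :=
  add_left_cancel ((mul_mul_add_mul_mul_star hx hker).trans (mul_mul_add_star_mul_mul hx hker).symm)

end KernelCondition

end Ring

end IsMoorePenroseInverse

section Ring

variable {R : Type*} [Ring R] [StarRing R] {t x p : R}

theorem two_mul_mul_mul_star_eq (hx : IsSelfAdjoint x) (hp : IsSelfAdjoint p)
    (ht : t * x * t + t * x * star t = t) (hpb : p * (t * x * star t) = t * x * star t)
    (htp : t * p = star t * p) (hptp : p * (t * p) = t * p) :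
    2 * (t * x * star t) = p * t * p := by
  have hbp : t * x * star t * p = t * x * star t := by
    have h := congrArg star hpb
    rwa [star_mul, hp.star_eq, (hx.conjugate t).star_eq] at h
  calc 2 * (t * x * star t) = t * x * (t * p) + t * x * star t * p := by
        rw [htp, ← mul_assoc (t * x), hbp, two_mul]
    _ = p * t * p := by rw [← mul_assoc, ← add_mul, ht, mul_assoc, hptp]

end Ring

section Operator

variable {𝕜 E : Type*} [RCLike 𝕜] [NormedAddCommGroup E] [InnerProductSpace 𝕜 E] [CompleteSpace E]

def IsCoR (T : E →L[𝕜] E) : Prop :=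
  ∀ x ∈ LinearMap.range (T : E →ₗ[𝕜] E) ⊓ LinearMap.range (adjoint T : E →ₗ[𝕜] E),
    T x = adjoint T x

namespace IsCoR

variable {T : E →L[𝕜] E} (hT : IsCoR T)
include hT

theorem apply_eq_zero_of_add_adjoint_apply_eq_zero {z : E} (hz : (T + adjoint T) z = 0) :
    T z = 0 := by
  have hTz : adjoint T z = -T z := eq_neg_of_add_eq_zero_right hz
  have h : (inner 𝕜 (T z) (T z) : 𝕜) = -inner 𝕜 (T z) (T z) :=
    calc (inner 𝕜 (T z) (T z) : 𝕜) = inner 𝕜 (T z) (adjoint T z) := by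
          rw [adjoint_inner_right, hT (T z) ⟨⟨z, rfl⟩, ⟨-z, by simp [hTz]⟩⟩, adjoint_inner_left]
      _ = -inner 𝕜 (T z) (T z) := by rw [hTz, inner_neg_right]
  exact inner_self_eq_zero.mp (CharZero.eq_neg_self_iff.mp h)

theorem mul_eq_zero_of_add_star_mul_eq_zero {A : E →L[𝕜] E} (hA : (T + star T) * A = 0) :
    T * A = 0 :=
  ext fun z => hT.apply_eq_zero_of_add_adjoint_apply_eq_zero <| by
    simpa [star_eq_adjoint] using congr($hA z)

theorem mul_eq_star_mul_of_range_eq_inf {P : E →L[𝕜] E}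
    (hPr : LinearMap.range (P : E →ₗ[𝕜] E) =
      LinearMap.range (T : E →ₗ[𝕜] E) ⊓ LinearMap.range (adjoint T : E →ₗ[𝕜] E)) :
    T * P = star T * P :=
  ext fun z => hT (P z) (hPr ▸ ⟨z, rfl⟩)

end IsCoR

theorem mul_eq_self_of_eq_mul_of_eq_star_mul {T P : E →L[𝕜] E}
    (hPr : LinearMap.range (P : E →ₗ[𝕜] E) =
      LinearMap.range (T : E →ₗ[𝕜] E) ⊓ LinearMap.range (adjoint T : E →ₗ[𝕜] E))
    (hP : IsIdempotentElem P) {A B C : E →L[𝕜] E} (hA : T * A = C) (hB : star T * B = C) :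
    P * C = C :=
  ext fun z => (LinearMap.IsIdempotentElem.mem_range_iff hP.toLinearMap).mp <| hPr ▸
    ⟨⟨A z, by simp [← hA]⟩, ⟨B z, by simp [← hB, star_eq_adjoint]⟩⟩

end Operator

variable {H : Type*} [NormedAddCommGroup H] [InnerProductSpace ℂ H] [CompleteSpace H]

theorem stmt13_general (T : H →L[ℂ] H)
    (hCoR : ∀ x ∈ LinearMap.range (T : H →ₗ[ℂ] H) ⊓ LinearMap.range (adjoint T : H →ₗ[ℂ] H), T x = adjoint T x)
    (P : H →L[ℂ] H) (hP1 : IsIdempotentElem P) (hP2 : IsSelfAdjoint P)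
    (hPr : LinearMap.range (P : H →ₗ[ℂ] H) = LinearMap.range (T : H →ₗ[ℂ] H) ⊓ LinearMap.range (adjoint T : H →ₗ[ℂ] H))
    (X : H →L[ℂ] H)
    (h1 : (T + adjoint T) ∘L X ∘L (T + adjoint T) = T + adjoint T)
    (h2 : X ∘L (T + adjoint T) ∘L X = X)
    (h3 : IsSelfAdjoint ((T + adjoint T) ∘L X))
    (h4 : IsSelfAdjoint (X ∘L (T + adjoint T))) :
    (2 : ℂ) • (T ∘L X ∘L adjoint T) = P ∘L T ∘L P ∧
      (2 : ℂ) • (adjoint T ∘L X ∘L T) = P ∘L T ∘L P := by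
  simp only [← mul_def, ← star_eq_adjoint, ← mul_assoc, two_smul] at h1 h2 h3 h4 ⊢
  have hX : IsMoorePenroseInverse (T + star T) X := ⟨h1, h2, h3, h4⟩
  have hT : IsCoR T := hCoR
  have hker : ∀ A, (T + star T) * A = 0 → T * A = 0 :=
    fun _ => hT.mul_eq_zero_of_add_star_mul_eq_zero
  have hsymm := hX.mul_mul_star_eq_star_mul_mul hker
  have hTP := hT.mul_eq_star_mul_of_range_eq_inf hPr
  have hPB : P * (T * X * star T) = T * X * star T :=
    mul_eq_self_of_eq_mul_of_eq_star_mul hPr hP1 (mul_assoc _ _ _).symm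
      ((mul_assoc _ _ _).symm.trans hsymm.symm)
  have hPTP : P * (T * P) = T * P := mul_eq_self_of_eq_mul_of_eq_star_mul hPr hP1 rfl hTP.symm
  have key := two_mul_mul_mul_star_eq (hX.isSelfAdjoint (.add_star_self T)) hP2
    (hX.mul_mul_add_mul_mul_star hker) hPB hTP hPTP
  rw [← hsymm, and_self, ← two_mul, key]

theorem stmt13 (T : H →L[ℂ] H) (hT : IsClosed (LinearMap.range (T : H →ₗ[ℂ] H) : Set H))
    (hCoR : ∀ x ∈ LinearMap.range (T : H →ₗ[ℂ] H) ⊓ LinearMap.range (adjoint T : H →ₗ[ℂ] H), T x = adjoint T x)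
    (hsum : IsClosed ((LinearMap.range (T : H →ₗ[ℂ] H) ⊔ LinearMap.range (adjoint T : H →ₗ[ℂ] H) : Submodule ℂ H) : Set H))
    (P : H →L[ℂ] H) (hP1 : IsIdempotentElem P) (hP2 : IsSelfAdjoint P)
    (hPr : LinearMap.range (P : H →ₗ[ℂ] H) = LinearMap.range (T : H →ₗ[ℂ] H) ⊓ LinearMap.range (adjoint T : H →ₗ[ℂ] H))
    (X : H →L[ℂ] H)
    (h1 : (T + adjoint T) ∘L X ∘L (T + adjoint T) = T + adjoint T)
    (h2 : X ∘L (T + adjoint T) ∘L X = X)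
    (h3 : IsSelfAdjoint ((T + adjoint T) ∘L X))
    (h4 : IsSelfAdjoint (X ∘L (T + adjoint T))) :
    (2 : ℂ) • (T ∘L X ∘L adjoint T) = P ∘L T ∘L P ∧
      (2 : ℂ) • (adjoint T ∘L X ∘L T) = P ∘L T ∘L P :=
  stmt13_general T hCoR P hP1 hP2 hPr X h1 h2 h3 h4
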